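/- Let q > 1, p_j > 0 with ∑ p_j = 1, and n_k = k. For the function h as above and any cylinder Λ^{−q}_{c_1…c_r} of rank r, the increment of h over the cylinder equals ∏_{j=1}^{r} p̈_{c_j}, i.e., sup_{x ∈ Λ} h(x) − inf_{x ∈ Λ} h(x) = ∏_{j=1}^{r} p̈_{c_j}. -/

import Mathlib

/-- `β_i = p_0 + … + p_{i-1}` (so `β_0 = 0`). -/
noncomputable def beta (p : ℕ → ℝ) (i : ℕ) : ℝ := ∑ j ∈ Finset.range i, p j

/-- Parity-modified `β̈`. -/
noncomputable def ddBeta (q : ℕ) (p : ℕ → ℝ) (i pos : ℕ) : ℝ :=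
  if Even pos then beta p i else beta p (q - 1 - i)

/-- Parity-modified `p̈`. -/
noncomputable def ddP (q : ℕ) (p : ℕ → ℝ) (i pos : ℕ) : ℝ :=
  if Even pos then p i else p (q - 1 - i)

/-- The Salem series for the identity enumeration `n_k = k`
(digit `i k` is at 1-based position `k+1`). -/
noncomputable def salemId (q : ℕ) (p : ℕ → ℝ) (i : ℕ → ℕ) : ℝ :=
  ∑' k : ℕ, ddBeta q p (i k) (k + 1) * ∏ r ∈ Finset.range k, ddP q p (i r) (r + 1)

/-!
On the cylinder of the digits `c_1 … c_r`, `h = S + P · t`, where `S` and `P = ∏ p̈_{c_j}` depend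
only on the prescribed digits and `t` is a series of the same shape built from the remaining digits.
Since `β̈ + p̈ ≤ 1`, the partial sums of such a series telescope below `1`, so `t ∈ [0, 1]`.
Both bounds are attained: continuing with the digit `q - 1` at even and `0` at odd positions makes
every `β̈` equal to `β_{q-1}` and every `p̈` equal to `p_{q-1}`, so `t` is the geometric series
`β_{q-1} / (1 - p_{q-1}) = 1`; the opposite choice makes every `β̈` vanish, so `t = 0`.
-/

open Finset

noncomputable def salemSeries (a b : ℕ → ℝ) : ℝ := ∑' k, a k * ∏ j ∈ range k, b j

section SalemSeries

variable {a b : ℕ → ℝ}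

lemma sum_range_mul_prod_add_prod_le_one (hb : ∀ k, 0 ≤ b k) (hab : ∀ k, a k + b k ≤ 1)
    (n : ℕ) : ∑ k ∈ range n, a k * ∏ j ∈ range k, b j + ∏ j ∈ range n, b j ≤ 1 := by
  induction n with
  | zero => simp
  | succ n ih =>
    have hprod : 0 ≤ ∏ j ∈ range n, b j := prod_nonneg fun j _ => hb j
    rw [sum_range_succ, prod_range_succ]
    nlinarith [hab n]

lemma sum_range_mul_prod_le_one (hb : ∀ k, 0 ≤ b k) (hab : ∀ k, a k + b k ≤ 1) (n : ℕ) :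
    ∑ k ∈ range n, a k * ∏ j ∈ range k, b j ≤ 1 := by
  linarith [sum_range_mul_prod_add_prod_le_one hb hab n, prod_nonneg fun j (_ : j ∈ range n) => hb j]

lemma mul_prod_nonneg (ha : ∀ k, 0 ≤ a k) (hb : ∀ k, 0 ≤ b k) (k : ℕ) :
    0 ≤ a k * ∏ j ∈ range k, b j :=
  mul_nonneg (ha k) (prod_nonneg fun j _ => hb j)

lemma summable_salemSeries (ha : ∀ k, 0 ≤ a k) (hb : ∀ k, 0 ≤ b k)
    (hab : ∀ k, a k + b k ≤ 1) : Summable fun k => a k * ∏ j ∈ range k, b j :=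
  summable_of_sum_range_le (mul_prod_nonneg ha hb) (sum_range_mul_prod_le_one hb hab)

lemma salemSeries_nonneg (ha : ∀ k, 0 ≤ a k) (hb : ∀ k, 0 ≤ b k) : 0 ≤ salemSeries a b :=
  tsum_nonneg (mul_prod_nonneg ha hb)

lemma salemSeries_le_one (ha : ∀ k, 0 ≤ a k) (hb : ∀ k, 0 ≤ b k)
    (hab : ∀ k, a k + b k ≤ 1) : salemSeries a b ≤ 1 :=
  Real.tsum_le_of_sum_range_le (mul_prod_nonneg ha hb) (sum_range_mul_prod_le_one hb hab)

lemma salemSeries_eq_sum_add_prod_mul (hs : Summable fun k => a k * ∏ j ∈ range k, b j)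
    (r : ℕ) :
    salemSeries a b = ∑ k ∈ range r, a k * ∏ j ∈ range k, b j +
      (∏ j ∈ range r, b j) * salemSeries (fun k => a (r + k)) (fun k => b (r + k)) := by
  rw [salemSeries, ← hs.sum_add_tsum_nat_add r, salemSeries, ← tsum_mul_left]
  congr 1
  refine tsum_congr fun k => ?_
  rw [add_comm k r, prod_range_add]
  ring

lemma salemSeries_const {α β : ℝ} (hαβ : α + β = 1) (hβ : 0 ≤ β) (hβ1 : β < 1) :
    salemSeries (fun _ => α) (fun _ => β) = 1 := by
  simp only [salemSeries, prod_const, card_range]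
  rw [tsum_mul_left, tsum_geometric_of_lt_one hβ hβ1, show 1 - β = α by linarith,
    mul_inv_cancel₀ (by linarith)]

lemma salemSeries_zero_left : salemSeries (fun _ => 0) b = 0 := by
  simp [salemSeries]

end SalemSeries

section Digits

variable {q : ℕ} {p : ℕ → ℝ}

noncomputable def digitBeta (q : ℕ) (p : ℕ → ℝ) (i : ℕ → ℕ) (k : ℕ) : ℝ :=
  ddBeta q p (i k) (k + 1)

noncomputable def digitP (q : ℕ) (p : ℕ → ℝ) (i : ℕ → ℕ) (k : ℕ) : ℝ :=
  ddP q p (i k) (k + 1)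

lemma salemId_eq_salemSeries (i : ℕ → ℕ) :
    salemId q p i = salemSeries (digitBeta q p i) (digitP q p i) := rfl

lemma beta_add_self (m : ℕ) : beta p m + p m = beta p (m + 1) :=
  (sum_range_succ p m).symm

lemma beta_pred_add_self (hq : 0 < q) (hps : ∑ j ∈ range q, p j = 1) :
    beta p (q - 1) + p (q - 1) = 1 := by
  rw [beta_add_self, Nat.sub_add_cancel hq, beta, hps]

lemma beta_pos (hp : ∀ j < q, 0 < p j) {m : ℕ} (hm0 : 0 < m) (hm : m ≤ q) : 0 < beta p m :=
  sum_pos (fun j hj => hp j (by simp at hj; omega)) ⟨0, mem_range.mpr hm0⟩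

lemma beta_nonneg (hp : ∀ j < q, 0 ≤ p j) {m : ℕ} (hm : m ≤ q) : 0 ≤ beta p m :=
  sum_nonneg fun j hj => hp j (by simp at hj; omega)

lemma beta_add_self_le_one (hp : ∀ j < q, 0 ≤ p j) (hps : ∑ j ∈ range q, p j = 1) {m : ℕ}
    (hm : m < q) : beta p m + p m ≤ 1 := by
  rw [beta_add_self, ← hps, beta]
  exact sum_le_sum_of_subset_of_nonneg (range_subset_range.mpr hm)
    fun j hj _ => hp j (mem_range.mp hj)

lemma ddBeta_nonneg (hp : ∀ j < q, 0 ≤ p j) {i : ℕ} (hi : i < q) (pos : ℕ) :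
    0 ≤ ddBeta q p i pos := by
  unfold ddBeta
  split_ifs <;> exact beta_nonneg hp (by omega)

lemma ddP_nonneg (hp : ∀ j < q, 0 ≤ p j) {i : ℕ} (hi : i < q) (pos : ℕ) :
    0 ≤ ddP q p i pos := by
  unfold ddP
  split_ifs <;> exact hp _ (by omega)

lemma ddBeta_add_ddP_le_one (hp : ∀ j < q, 0 ≤ p j) (hps : ∑ j ∈ range q, p j = 1) {i : ℕ}
    (hi : i < q) (pos : ℕ) : ddBeta q p i pos + ddP q p i pos ≤ 1 := by
  unfold ddBeta ddP
  split_ifs <;> exact beta_add_self_le_one hp hps (by omega)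

lemma digitBeta_nonneg (hp : ∀ j < q, 0 ≤ p j) {i : ℕ → ℕ} (hi : ∀ k, i k < q) (k : ℕ) :
    0 ≤ digitBeta q p i k :=
  ddBeta_nonneg hp (hi k) (k + 1)

lemma digitP_nonneg (hp : ∀ j < q, 0 ≤ p j) {i : ℕ → ℕ} (hi : ∀ k, i k < q) (k : ℕ) :
    0 ≤ digitP q p i k :=
  ddP_nonneg hp (hi k) (k + 1)

lemma digitBeta_add_digitP_le_one (hp : ∀ j < q, 0 ≤ p j) (hps : ∑ j ∈ range q, p j = 1)
    {i : ℕ → ℕ} (hi : ∀ k, i k < q) (k : ℕ) : digitBeta q p i k + digitP q p i k ≤ 1 :=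
  ddBeta_add_ddP_le_one hp hps (hi k) (k + 1)

def maxDigit (q pos : ℕ) : ℕ := if Even pos then q - 1 else 0

def minDigit (q pos : ℕ) : ℕ := if Even pos then 0 else q - 1

lemma maxDigit_lt (hq : 0 < q) (pos : ℕ) : maxDigit q pos < q := by
  unfold maxDigit; split_ifs <;> omega

lemma minDigit_lt (hq : 0 < q) (pos : ℕ) : minDigit q pos < q := by
  unfold minDigit; split_ifs <;> omega

lemma ddBeta_maxDigit (pos : ℕ) : ddBeta q p (maxDigit q pos) pos = beta p (q - 1) := by
  unfold ddBeta maxDigit; split_ifs <;> simp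

lemma ddP_maxDigit (pos : ℕ) : ddP q p (maxDigit q pos) pos = p (q - 1) := by
  unfold ddP maxDigit; split_ifs <;> simp

lemma ddBeta_minDigit (pos : ℕ) : ddBeta q p (minDigit q pos) pos = 0 := by
  unfold ddBeta minDigit; split_ifs <;> simp [beta]

lemma salemId_eq_of_eq_on_range (hp : ∀ j < q, 0 ≤ p j) (hps : ∑ j ∈ range q, p j = 1)
    {i c : ℕ → ℕ} {r : ℕ} (hi : ∀ k, i k < q) (hic : ∀ j < r, i j = c j) :
    salemId q p i = ∑ k ∈ range r, digitBeta q p c k * ∏ j ∈ range k, digitP q p c j +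
      (∏ j ∈ range r, digitP q p c j) *
        salemSeries (fun k => digitBeta q p i (r + k)) (fun k => digitP q p i (r + k)) := by
  have hβ : ∀ k < r, digitBeta q p i k = digitBeta q p c k := fun k hk => by
    rw [digitBeta, digitBeta, hic k hk]
  have hP : ∀ k < r, digitP q p i k = digitP q p c k := fun k hk => by
    rw [digitP, digitP, hic k hk]
  have hs := summable_salemSeries (digitBeta_nonneg hp hi) (digitP_nonneg hp hi)
    (digitBeta_add_digitP_le_one hp hps hi)
  rw [salemId_eq_salemSeries, salemSeries_eq_sum_add_prod_mul hs r,
    prod_congr rfl fun j hj => hP j (mem_range.mp hj)]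
  congr 1
  refine sum_congr rfl fun k hk => ?_
  have hk := mem_range.mp hk
  rw [hβ k hk, prod_congr rfl fun j hj => hP j ((mem_range.mp hj).trans hk)]

lemma salemId_mem_Icc (hp : ∀ j < q, 0 ≤ p j) (hps : ∑ j ∈ range q, p j = 1)
    {i c : ℕ → ℕ} {r : ℕ} (hi : ∀ k, i k < q) (hic : ∀ j < r, i j = c j) (hc : ∀ j < r, c j < q) :
    salemId q p i ∈ Set.Icc (∑ k ∈ range r, digitBeta q p c k * ∏ j ∈ range k, digitP q p c j)
      (∑ k ∈ range r, digitBeta q p c k * ∏ j ∈ range k, digitP q p c j +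
        ∏ j ∈ range r, digitP q p c j) := by
  have hprod : 0 ≤ ∏ j ∈ range r, digitP q p c j :=
    prod_nonneg fun j hj => ddP_nonneg hp (hc j (mem_range.mp hj)) (j + 1)
  have htail_nonneg := salemSeries_nonneg (fun k => digitBeta_nonneg hp hi (r + k))
    (fun k => digitP_nonneg hp hi (r + k))
  have htail_le_one := salemSeries_le_one (fun k => digitBeta_nonneg hp hi (r + k))
    (fun k => digitP_nonneg hp hi (r + k)) (fun k => digitBeta_add_digitP_le_one hp hps hi (r + k))
  rw [salemId_eq_of_eq_on_range hp hps hi hic]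
  constructor <;> nlinarith

def extendDigits (c d : ℕ → ℕ) (r k : ℕ) : ℕ := if k < r then c k else d k

lemma extendDigits_of_lt {c d : ℕ → ℕ} {r k : ℕ} (hk : k < r) : extendDigits c d r k = c k :=
  if_pos hk

lemma extendDigits_add (c d : ℕ → ℕ) (r k : ℕ) : extendDigits c d r (r + k) = d (r + k) :=
  if_neg (by omega)

lemma extendDigits_lt {c d : ℕ → ℕ} {r : ℕ} (hc : ∀ j < r, c j < q) (hd : ∀ k, d k < q)
    (k : ℕ) : extendDigits c d r k < q := by
  unfold extendDigits; split_ifs with hk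
  exacts [hc k hk, hd k]

lemma salemId_extendDigits_maxDigit (hq : 1 < q) (hp : ∀ j < q, 0 < p j)
    (hps : ∑ j ∈ range q, p j = 1) {c : ℕ → ℕ} {r : ℕ} (hc : ∀ j < r, c j < q) :
    salemId q p (extendDigits c (fun k => maxDigit q (k + 1)) r) =
      ∑ k ∈ range r, digitBeta q p c k * ∏ j ∈ range k, digitP q p c j +
        ∏ j ∈ range r, digitP q p c j := by
  have hp0 : ∀ j < q, 0 ≤ p j := fun j hj => (hp j hj).le
  have hsum := beta_pred_add_self (p := p) (by omega) hps
  have hβ := beta_pos hp (m := q - 1) (by omega) (by omega)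
  rw [salemId_eq_of_eq_on_range hp0 hps (extendDigits_lt hc fun k => maxDigit_lt (by omega) _)
    fun j hj => extendDigits_of_lt hj]
  simp only [digitBeta, digitP, extendDigits_add, ddBeta_maxDigit, ddP_maxDigit]
  rw [salemSeries_const hsum (hp0 _ (by omega)) (by linarith), mul_one]

lemma salemId_extendDigits_minDigit (hq : 0 < q) (hp : ∀ j < q, 0 ≤ p j)
    (hps : ∑ j ∈ range q, p j = 1) {c : ℕ → ℕ} {r : ℕ} (hc : ∀ j < r, c j < q) :
    salemId q p (extendDigits c (fun k => minDigit q (k + 1)) r) =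
      ∑ k ∈ range r, digitBeta q p c k * ∏ j ∈ range k, digitP q p c j := by
  rw [salemId_eq_of_eq_on_range hp hps (extendDigits_lt hc fun k => minDigit_lt hq _)
    fun j hj => extendDigits_of_lt hj]
  simp only [digitBeta, extendDigits_add, ddBeta_minDigit, salemSeries_zero_left]
  rw [mul_zero, add_zero]

end Digits

theorem salem_increment_over_cylinder_general
    (q : ℕ) (hq : 1 < q) (p : ℕ → ℝ)
    (hp : ∀ j < q, 0 < p j)
    (hps : ∑ j ∈ Finset.range q, p j = 1)
    (r : ℕ) (c : ℕ → ℕ) (hc : ∀ j < r, c j < q) :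
    sSup {y : ℝ | ∃ i : ℕ → ℕ, (∀ k, i k < q) ∧ (∀ j < r, i j = c j) ∧ salemId q p i = y} -
      sInf {y : ℝ | ∃ i : ℕ → ℕ, (∀ k, i k < q) ∧ (∀ j < r, i j = c j) ∧ salemId q p i = y} =
      ∏ j ∈ Finset.range r, ddP q p (c j) (j + 1) := by
  set cylinder := {y : ℝ | ∃ i : ℕ → ℕ, (∀ k, i k < q) ∧ (∀ j < r, i j = c j) ∧ salemId q p i = y}
  set S := ∑ k ∈ range r, digitBeta q p c k * ∏ j ∈ range k, digitP q p c j
  have hp0 : ∀ j < q, 0 ≤ p j := fun j hj => (hp j hj).le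
  have hmax : IsGreatest cylinder (S + ∏ j ∈ range r, digitP q p c j) :=
    ⟨⟨_, extendDigits_lt hc fun k => maxDigit_lt (by omega) _, fun j hj => extendDigits_of_lt hj,
        salemId_extendDigits_maxDigit hq hp hps hc⟩,
      by rintro _ ⟨i, hi, hic, rfl⟩; exact (salemId_mem_Icc hp0 hps hi hic hc).2⟩
  have hmin : IsLeast cylinder S :=
    ⟨⟨_, extendDigits_lt hc fun k => minDigit_lt (by omega) _, fun j hj => extendDigits_of_lt hj,
        salemId_extendDigits_minDigit (by omega) hp0 hps hc⟩,
      by rintro _ ⟨i, hi, hic, rfl⟩; exact (salemId_mem_Icc hp0 hps hi hic hc).1⟩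
  rw [hmax.csSup_eq, hmin.csInf_eq, add_sub_cancel_left]
  rfl

/-- The increment of the Salem function over the cylinder `Λ^{-q}_{c_1…c_r}`
equals `∏_{j=1}^r p̈_{c_j}`. -/
theorem salem_increment_over_cylinder
    (q : ℕ) (hq : 1 < q) (p : ℕ → ℝ)
    (hp : ∀ j < q, 0 < p j)
    (hps : ∑ j ∈ Finset.range q, p j = 1)
    (r : ℕ) (hr : 1 ≤ r) (c : ℕ → ℕ) (hc : ∀ j < r, c j < q) :
    sSup {y : ℝ | ∃ i : ℕ → ℕ, (∀ k, i k < q) ∧ (∀ j < r, i j = c j) ∧ salemId q p i = y} -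
      sInf {y : ℝ | ∃ i : ℕ → ℕ, (∀ k, i k < q) ∧ (∀ j < r, i j = c j) ∧ salemId q p i = y} =
      ∏ j ∈ Finset.range r, ddP q p (c j) (j + 1) :=
  salem_increment_over_cylinder_general q hq p hp hps r c hc
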